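/- For real n×n matrices A, E, Z, T ≥ 0, and X the solution of A X + X A^T = -Z, the trace of E^T E (X - e^{AT} X e^{A^T T}) equals the trace of Z (Y - e^{A^T T} Y e^{A T}), where Y solves A^T Y + Y A = -E^T E. (Duality of the finite-horizon trace formula.) -/

import Mathlib

open Matrix NormedSpace

/-!
Substituting `Eᵀ E = -(Aᵀ Y + Y A)` and `Z = -(A X + X Aᵀ)`, both sides pair a Lyapunov operator
with a congruence `M · Mᵀ` (for `M = 1` and `M = e^{T A}`). Whenever `M` commutes with `A`, cycling
the trace moves the Lyapunov operator from `Y` onto `X`: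
`tr((Aᵀ Y + Y A) M X Mᵀ) = tr((A X + X Aᵀ) Mᵀ Y M)`.
-/

namespace Matrix

variable {ι R : Type*} [Fintype ι] [CommRing R]

theorem trace_transpose_mul_mul_conj_of_commute {A M : Matrix ι ι R} (h : Commute M A)
    (X Y : Matrix ι ι R) :
    (Aᵀ * Y * (M * X * Mᵀ)).trace = (X * Aᵀ * (Mᵀ * Y * M)).trace := by
  have hT : Mᵀ * Aᵀ = Aᵀ * Mᵀ := by rw [← transpose_mul, ← transpose_mul, h.eq]
  calc (Aᵀ * Y * (M * X * Mᵀ)).trace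
      = (Aᵀ * (Y * M * X * Mᵀ)).trace := by simp only [Matrix.mul_assoc]
    _ = (Y * M * X * (Mᵀ * Aᵀ)).trace := by rw [trace_mul_comm, Matrix.mul_assoc]
    _ = (Y * M * (X * Aᵀ * Mᵀ)).trace := by rw [hT]; simp only [Matrix.mul_assoc]
    _ = (X * Aᵀ * (Mᵀ * Y * M)).trace := by rw [trace_mul_comm]; simp only [Matrix.mul_assoc]

theorem trace_mul_mul_conj_of_commute {A M : Matrix ι ι R} (h : Commute M A)
    (X Y : Matrix ι ι R) :
    (Y * A * (M * X * Mᵀ)).trace = (A * X * (Mᵀ * Y * M)).trace := by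
  calc (Y * A * (M * X * Mᵀ)).trace
      = (Y * (M * A) * (X * Mᵀ)).trace := by rw [h.eq]; simp only [Matrix.mul_assoc]
    _ = (Y * M * (A * X * Mᵀ)).trace := by simp only [Matrix.mul_assoc]
    _ = (A * X * (Mᵀ * Y * M)).trace := by rw [trace_mul_comm]; simp only [Matrix.mul_assoc]

theorem trace_lyapunov_mul_conj_of_commute {A M : Matrix ι ι R} (h : Commute M A)
    (X Y : Matrix ι ι R) :
    ((Aᵀ * Y + Y * A) * (M * X * Mᵀ)).trace = ((A * X + X * Aᵀ) * (Mᵀ * Y * M)).trace := by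
  rw [Matrix.add_mul, Matrix.add_mul, trace_add, trace_add,
    trace_transpose_mul_mul_conj_of_commute h, trace_mul_mul_conj_of_commute h, add_comm]

end Matrix

theorem stmt3_general {n : ℕ} (A E Z : Matrix (Fin n) (Fin n) ℝ) (T : ℝ)
    (X Y : Matrix (Fin n) (Fin n) ℝ)
    (hX : A * X + X * Aᵀ = -Z) (hY : Aᵀ * Y + Y * A = -(Eᵀ * E)) :
    (Eᵀ * E * (X - exp (T • A) * X * exp (T • Aᵀ))).trace
      = (Z * (Y - exp (T • Aᵀ) * Y * exp (T • A))).trace := by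
  have hE : Eᵀ * E = -(Aᵀ * Y + Y * A) := by rw [hY, neg_neg]
  have hZ : Z = -(A * X + X * Aᵀ) := by rw [hX, neg_neg]
  have hexpT : exp (T • Aᵀ) = (exp (T • A))ᵀ := by rw [← transpose_smul, exp_transpose]
  have hcomm : Commute (exp (T • A)) A := ((Commute.refl A).smul_left T).exp_left
  have hconj := trace_lyapunov_mul_conj_of_commute hcomm X Y
  have hid := trace_lyapunov_mul_conj_of_commute (Commute.one_left A) X Y
  simp only [Matrix.one_mul, Matrix.mul_one, transpose_one] at hid
  rw [hE, hZ, hexpT]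
  simp only [Matrix.mul_sub, trace_sub, Matrix.neg_mul, trace_neg, hid, hconj]

/-- duality of the finite-horizon trace formula. -/
theorem stmt3 {n : ℕ} (A E Z : Matrix (Fin n) (Fin n) ℝ) (T : ℝ) (hT : 0 ≤ T)
    (X Y : Matrix (Fin n) (Fin n) ℝ)
    (hX : A * X + X * Aᵀ = -Z) (hY : Aᵀ * Y + Y * A = -(Eᵀ * E)) :
    (Eᵀ * E * (X - exp (T • A) * X * exp (T • Aᵀ))).trace
      = (Z * (Y - exp (T • Aᵀ) * Y * exp (T • A))).trace :=
  stmt3_general A E Z T X Y hX hY
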